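/- Let $t \ge 0$ be an integer and let $f > g > 0$ be real numbers. Then $\int_0^\infty \ln\Big(\frac{1 + f\lambda}{1 + g\lambda}\Big) \lambda^{t} e^{-\lambda} \, d\lambda = t! \sum_{k=1}^{t+1} \Big( e^{1/f} E_{t+2-k}(1/f) - e^{1/g} E_{t+2-k}(1/g) \Big)$, where $E_n(z) = \int_1^\infty s^{-n} e^{-z s} \, ds$ is the generalized exponential integral. -/

import Mathlib

open MeasureTheory Set

/-- The generalized exponential integral `E_n(z) = ∫_1^∞ s^{-n} e^{-zs} ds`. -/
noncomputable def expIntE (n : ℕ) (z : ℝ) : ℝ :=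
  ∫ s in Ioi (1 : ℝ), s ^ (-(n : ℤ)) * Real.exp (-z * s)

/-!
Split `log ((1 + fλ) / (1 + gλ)) = log (1 + fλ) - log (1 + gλ)`. For `c > 0`, integrating
`L_t = ∫₀^∞ log (1 + cλ) λ^t e^{-λ} dλ` by parts against `e^{-λ}` gives
`L_t = t L_{t-1} + c ∫₀^∞ λ^t e^{-λ} / (1 + cλ) dλ`. The last integral equals `t! A_{t+1}`, where
`A_m = ∫₀^∞ (1 + cλ)^{-m} e^{-λ} dλ`: split `cλ^{t+1} / (1 + cλ) = λ^t - λ^t / (1 + cλ)` and use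
the recurrence `A_{m+1} + (m+1) c A_{m+2} = 1`, itself an integration by parts. Hence
`L_t = t! ∑_{j=1}^{t+1} c A_j`, and the substitution `s = 1 + cλ` gives `c A_m = e^{1/c} E_m(1/c)`.
-/

open Filter Real Topology

section LaplaceAtOne

variable {u u' : ℝ → ℝ}

lemma integrableOn_pow_mul_exp_neg (n : ℕ) :
    IntegrableOn (fun x : ℝ => x ^ n * exp (-x)) (Ioi 0) := by
  refine (GammaIntegral_convergent (s := n + 1) (by positivity)).congr_fun (fun x _ => ?_)
    measurableSet_Ioi
  simp only [add_sub_cancel_right, rpow_natCast, mul_comm]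

lemma integral_pow_mul_exp_neg (n : ℕ) : ∫ x in Ioi (0 : ℝ), x ^ n * exp (-x) = n.factorial := by
  rw [← Gamma_nat_eq_factorial, Gamma_eq_integral (by positivity)]
  refine setIntegral_congr_fun measurableSet_Ioi (fun x _ => ?_)
  simp only [add_sub_cancel_right, rpow_natCast, mul_comm]

lemma integrableOn_mul_exp_neg_of_abs_le {C : ℝ} {n : ℕ} (hu : ContinuousOn u (Ioi 0))
    (hle : ∀ x ∈ Ioi (0 : ℝ), |u x| ≤ C * x ^ n) :
    IntegrableOn (fun x => u x * exp (-x)) (Ioi 0) := by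
  refine ((integrableOn_pow_mul_exp_neg n).const_mul C).mono'
    ((hu.mul (by fun_prop)).aestronglyMeasurable measurableSet_Ioi) ?_
  filter_upwards [ae_restrict_mem measurableSet_Ioi] with x hx
  rw [norm_mul, norm_of_nonneg (exp_pos _).le, ← mul_assoc]
  exact mul_le_mul_of_nonneg_right (hle x hx) (exp_pos _).le

lemma tendsto_mul_exp_neg_of_abs_le {C : ℝ} {n : ℕ}
    (hle : ∀ x ∈ Ioi (0 : ℝ), |u x| ≤ C * x ^ n) :
    Tendsto (fun x => u x * exp (-x)) atTop (𝓝 0) := by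
  refine squeeze_zero_norm' ?_ (by simpa using
    (tendsto_pow_mul_exp_neg_atTop_nhds_zero n).const_mul C)
  filter_upwards [eventually_gt_atTop 0] with x hx
  rw [norm_mul, norm_of_nonneg (exp_pos _).le, ← mul_assoc]
  exact mul_le_mul_of_nonneg_right (hle x hx) (exp_pos _).le

lemma integral_mul_exp_neg_eq_add_integral_deriv_mul_exp_neg
    (hu : ∀ x ∈ Ici (0 : ℝ), HasDerivAt u (u' x) x)
    (hint : IntegrableOn (fun x => u x * exp (-x)) (Ioi 0))
    (hint' : IntegrableOn (fun x => u' x * exp (-x)) (Ioi 0))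
    (hlim : Tendsto (fun x => u x * exp (-x)) atTop (𝓝 0)) :
    ∫ x in Ioi (0 : ℝ), u x * exp (-x) = u 0 + ∫ x in Ioi (0 : ℝ), u' x * exp (-x) := by
  have hderiv : ∀ x ∈ Ici (0 : ℝ), HasDerivAt (fun x => -(u x * exp (-x)))
      (u x * exp (-x) - u' x * exp (-x)) x := fun x hx => by
    refine ((hu x hx).fun_mul (hasDerivAt_neg x).exp).neg.congr_deriv ?_
    ring
  have := integral_Ioi_of_hasDerivAt_of_tendsto' hderiv (hint.sub hint') hlim.neg
  rw [integral_sub hint hint'] at this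
  simp only [neg_zero, exp_zero, mul_one, sub_neg_eq_add, zero_add] at this
  linarith

end LaplaceAtOne

lemma integral_Ioi_one_eq_mul_integral_Ioi_zero (g : ℝ → ℝ) {c : ℝ} (hc : 0 < c) :
    ∫ s in Ioi (1 : ℝ), g s = c * ∫ x in Ioi (0 : ℝ), g (1 + c * x) := by
  have hshift := (measurePreserving_add_right (volume : Measure ℝ) 1).setIntegral_preimage_emb
    (measurableEmbedding_addRight 1) g (Ioi 1)
  rw [preimage_add_const_Ioi, sub_self] at hshift
  have hscale := integral_comp_mul_left_Ioi (fun x => g (x + 1)) 0 hc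
  rw [mul_zero] at hscale
  rw [← hshift]
  simp only [add_comm 1 (c * _), hscale, smul_eq_mul, ← mul_assoc, mul_inv_cancel₀ hc.ne',
    one_mul]

noncomputable def laplaceInvPow (c : ℝ) (m : ℕ) : ℝ :=
  ∫ x in Ioi (0 : ℝ), ((1 + c * x) ^ m)⁻¹ * exp (-x)

section LaplaceInvPow

variable {c : ℝ}

lemma abs_inv_one_add_mul_pow_le_one (hc : 0 ≤ c) {x : ℝ} (hx : 0 ≤ x) (m : ℕ) :
    |((1 + c * x) ^ m)⁻¹| ≤ 1 := by
  rw [abs_of_pos (by positivity)]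
  exact inv_le_one_of_one_le₀ (one_le_pow₀ (le_add_of_nonneg_right (by positivity)))

lemma integrableOn_inv_pow_mul_exp_neg (hc : 0 ≤ c) (m : ℕ) :
    IntegrableOn (fun x => ((1 + c * x) ^ m)⁻¹ * exp (-x)) (Ioi 0) := by
  refine integrableOn_mul_exp_neg_of_abs_le (C := 1) (n := 0) ?_ fun x hx => ?_
  · exact ContinuousOn.inv₀ (by fun_prop) fun x hx => by have : (0 : ℝ) < x := hx; positivity
  · simpa using abs_inv_one_add_mul_pow_le_one hc (le_of_lt hx) m

lemma laplaceInvPow_succ_add (hc : 0 ≤ c) (m : ℕ) :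
    laplaceInvPow c (m + 1) + (m + 1) * c * laplaceInvPow c (m + 2) = 1 := by
  have hderiv : ∀ x ∈ Ici (0 : ℝ), HasDerivAt (fun x => ((1 + c * x) ^ (m + 1))⁻¹)
      (-((m + 1) * c) * ((1 + c * x) ^ (m + 2))⁻¹) x := fun x hx => by
    have hx : (0 : ℝ) ≤ x := hx
    have hpos : 0 < 1 + c * x := by positivity
    have hlin : HasDerivAt (fun x => 1 + c * x) c x := by
      simpa using ((hasDerivAt_id x).const_mul c).const_add 1
    refine ((hlin.fun_pow (m + 1)).fun_inv (pow_pos hpos _).ne').congr_deriv ?_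
    field_simp
    push_cast
    ring
  have hint' := (integrableOn_inv_pow_mul_exp_neg hc (m + 2)).const_mul (-((m + 1 : ℝ) * c))
  simp only [← mul_assoc] at hint'
  have h := integral_mul_exp_neg_eq_add_integral_deriv_mul_exp_neg hderiv
    (integrableOn_inv_pow_mul_exp_neg hc (m + 1)) hint'
    (tendsto_mul_exp_neg_of_abs_le (C := 1) (n := 0) fun x hx => by
      simpa using abs_inv_one_add_mul_pow_le_one hc (le_of_lt hx) (m + 1))
  simp only [mul_assoc, integral_const_mul, mul_zero, add_zero, one_pow, inv_one] at h
  rw [laplaceInvPow, laplaceInvPow, h]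
  ring

lemma integrableOn_pow_div_mul_exp_neg (hc : 0 ≤ c) (j : ℕ) :
    IntegrableOn (fun x => x ^ j / (1 + c * x) * exp (-x)) (Ioi 0) := by
  refine integrableOn_mul_exp_neg_of_abs_le (C := 1) (n := j) ?_ fun x hx => ?_
  · exact ContinuousOn.div (by fun_prop) (by fun_prop)
      fun x hx => by have : (0 : ℝ) < x := hx; positivity
  · have hx : (0 : ℝ) < x := hx
    rw [abs_of_pos (by positivity), one_mul]
    exact div_le_self (by positivity) (le_add_of_nonneg_right (by positivity))

lemma integral_pow_div_mul_exp_neg (hc : 0 < c) (j : ℕ) :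
    ∫ x in Ioi (0 : ℝ), x ^ j / (1 + c * x) * exp (-x) = j.factorial * laplaceInvPow c (j + 1) := by
  induction j with
  | zero => simp [laplaceInvPow]
  | succ j ih =>
    have hsplit : c * ∫ x in Ioi (0 : ℝ), x ^ (j + 1) / (1 + c * x) * exp (-x)
        = j.factorial - ∫ x in Ioi (0 : ℝ), x ^ j / (1 + c * x) * exp (-x) := by
      rw [← integral_const_mul, ← integral_pow_mul_exp_neg j,
        ← integral_sub (integrableOn_pow_mul_exp_neg j) (integrableOn_pow_div_mul_exp_neg hc.le j)]
      refine setIntegral_congr_fun measurableSet_Ioi fun x hx => ?_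
      have hx : (0 : ℝ) < x := hx
      field_simp
      ring
    have hrec := laplaceInvPow_succ_add hc.le j
    rw [ih] at hsplit
    refine mul_left_cancel₀ hc.ne' ?_
    rw [hsplit, Nat.factorial_succ]
    push_cast
    linear_combination -(j.factorial : ℝ) * hrec

end LaplaceInvPow

lemma sum_Icc_reflect_eq_sum_range {M : Type*} [AddCommMonoid M] (F : ℕ → M) (n : ℕ) :
    ∑ k ∈ Finset.Icc 1 (n + 1), F (n + 2 - k) = ∑ j ∈ Finset.range (n + 1), F (j + 1) := by
  refine Finset.sum_nbij' (fun k => n + 1 - k) (fun j => n + 1 - j) ?_ ?_ ?_ ?_ ?_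
    <;> intro k hk <;> simp only [Finset.mem_Icc, Finset.mem_range] at hk ⊢
    <;> first | omega | (congr 1; omega)

noncomputable def logMoment (c : ℝ) (t : ℕ) : ℝ :=
  ∫ x in Ioi (0 : ℝ), log (1 + c * x) * x ^ t * exp (-x)

section LogMoment

variable {c : ℝ}

lemma abs_log_one_add_mul_mul_pow_le (hc : 0 ≤ c) {x : ℝ} (hx : 0 ≤ x) (t : ℕ) :
    |log (1 + c * x) * x ^ t| ≤ c * x ^ (t + 1) := by
  have hlog : 0 ≤ log (1 + c * x) := log_nonneg (le_add_of_nonneg_right (by positivity))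
  have hle : log (1 + c * x) ≤ c * x := by
    linarith [log_le_sub_one_of_pos (show 0 < 1 + c * x by positivity)]
  rw [abs_of_nonneg (by positivity), pow_succ, ← mul_assoc, mul_right_comm]
  exact mul_le_mul_of_nonneg_right hle (by positivity)

lemma integrableOn_log_mul_pow_mul_exp_neg (hc : 0 ≤ c) (t : ℕ) :
    IntegrableOn (fun x => log (1 + c * x) * x ^ t * exp (-x)) (Ioi 0) := by
  refine integrableOn_mul_exp_neg_of_abs_le ?_ fun x hx =>
    abs_log_one_add_mul_mul_pow_le hc (le_of_lt hx) t
  exact ContinuousOn.mul (ContinuousOn.log (by fun_prop)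
    fun x hx => by have : (0 : ℝ) < x := hx; positivity) (by fun_prop)

-- At `t = 0` the truncated `t - 1` is harmless: its coefficient is `t`.
lemma logMoment_eq_mul_add (hc : 0 < c) (t : ℕ) :
    logMoment c t = t * logMoment c (t - 1) + c * (t.factorial * laplaceInvPow c (t + 1)) := by
  have hderiv : ∀ x ∈ Ici (0 : ℝ), HasDerivAt (fun x => log (1 + c * x) * x ^ t)
      (c * (x ^ t / (1 + c * x)) + t * (log (1 + c * x) * x ^ (t - 1))) x := fun x hx => by
    have hx : (0 : ℝ) ≤ x := hx
    have hpos : 0 < 1 + c * x := by positivity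
    have hlin : HasDerivAt (fun x => 1 + c * x) c x := by
      simpa using ((hasDerivAt_id x).const_mul c).const_add 1
    refine ((hlin.log hpos.ne').mul (hasDerivAt_pow t x)).congr_deriv ?_
    field_simp
  have hint' : IntegrableOn (fun x =>
      (c * (x ^ t / (1 + c * x)) + t * (log (1 + c * x) * x ^ (t - 1))) * exp (-x)) (Ioi 0) :=
    IntegrableOn.congr_fun (((integrableOn_pow_div_mul_exp_neg hc.le t).const_mul c).add
      ((integrableOn_log_mul_pow_mul_exp_neg hc.le (t - 1)).const_mul (t : ℝ)))
      (fun x _ => by simp only [Pi.add_apply]; ring) measurableSet_Ioi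
  have h := integral_mul_exp_neg_eq_add_integral_deriv_mul_exp_neg hderiv
    (integrableOn_log_mul_pow_mul_exp_neg hc.le t) hint'
    (tendsto_mul_exp_neg_of_abs_le fun x hx => abs_log_one_add_mul_mul_pow_le hc.le (le_of_lt hx) t)
  simp only [mul_zero, add_zero, log_one, zero_mul, zero_add] at h
  rw [logMoment, logMoment, h, ← integral_pow_div_mul_exp_neg hc, ← integral_const_mul,
    ← integral_const_mul, ← integral_add
      ((integrableOn_log_mul_pow_mul_exp_neg hc.le (t - 1)).const_mul _)
      ((integrableOn_pow_div_mul_exp_neg hc.le t).const_mul _)]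
  congr 1
  funext x
  ring

lemma logMoment_eq_sum (hc : 0 < c) (t : ℕ) :
    logMoment c t = t.factorial * ∑ j ∈ Finset.range (t + 1), c * laplaceInvPow c (j + 1) := by
  induction t with
  | zero =>
    rw [logMoment_eq_mul_add hc 0]
    simp
  | succ t ih =>
    rw [logMoment_eq_mul_add hc, Nat.add_sub_cancel, ih, Finset.sum_range_succ _ (t + 1),
      Nat.factorial_succ]
    push_cast
    ring

end LogMoment

lemma exp_inv_mul_expIntE {c : ℝ} (hc : 0 < c) (m : ℕ) :
    exp (1 / c) * expIntE m (1 / c) = c * laplaceInvPow c m := by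
  have hsubst : ∀ x ∈ Ioi (0 : ℝ), (1 + c * x) ^ (-(m : ℤ)) * exp (-(1 / c) * (1 + c * x))
      = exp (-(1 / c)) * (((1 + c * x) ^ m)⁻¹ * exp (-x)) := fun x _ => by
    rw [zpow_neg, zpow_natCast, show -(1 / c) * (1 + c * x) = -(1 / c) + -x by
      field_simp; ring, exp_add]
    ring
  rw [expIntE, integral_Ioi_one_eq_mul_integral_Ioi_zero _ hc,
    setIntegral_congr_fun measurableSet_Ioi hsubst, integral_const_mul, ← laplaceInvPow, exp_neg]
  field_simp

lemma logMoment_eq_sum_expIntE {c : ℝ} (hc : 0 < c) (t : ℕ) :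
    logMoment c t = t.factorial *
      ∑ k ∈ Finset.Icc 1 (t + 1), exp (1 / c) * expIntE (t + 2 - k) (1 / c) := by
  rw [sum_Icc_reflect_eq_sum_range (fun m => exp (1 / c) * expIntE m (1 / c)),
    logMoment_eq_sum hc]
  simp only [exp_inv_mul_expIntE hc]

/-- The core analytic identity for the ergodic capacity:
`∫₀^∞ ln((1+fλ)/(1+gλ)) λ^t e^{-λ} dλ
  = t! ∑_{k=1}^{t+1} (e^{1/f} E_{t+2-k}(1/f) - e^{1/g} E_{t+2-k}(1/g))`. -/
theorem integral_log_ratio_mul_pow_mul_exp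
    (t : ℕ) (f g : ℝ) (hg : 0 < g) (hfg : g < f) :
    ∫ lam in Ioi (0 : ℝ),
        Real.log ((1 + f * lam) / (1 + g * lam)) * lam ^ t * Real.exp (-lam)
      = (Nat.factorial t : ℝ)
          * ∑ k ∈ Finset.Icc 1 (t + 1),
              (Real.exp (1 / f) * expIntE (t + 2 - k) (1 / f)
                - Real.exp (1 / g) * expIntE (t + 2 - k) (1 / g)) := by
  have hf : 0 < f := hg.trans hfg
  have hlog_div : ∀ lam ∈ Ioi (0 : ℝ),
      log ((1 + f * lam) / (1 + g * lam)) * lam ^ t * exp (-lam)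
        = log (1 + f * lam) * lam ^ t * exp (-lam) - log (1 + g * lam) * lam ^ t * exp (-lam) :=
    fun lam (hlam : 0 < lam) => by rw [log_div (by positivity) (by positivity)]; ring
  rw [setIntegral_congr_fun measurableSet_Ioi hlog_div, integral_sub
    (integrableOn_log_mul_pow_mul_exp_neg hf.le t) (integrableOn_log_mul_pow_mul_exp_neg hg.le t),
    ← logMoment, ← logMoment, logMoment_eq_sum_expIntE hf, logMoment_eq_sum_expIntE hg,
    ← mul_sub, ← Finset.sum_sub_distrib]
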